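/- arXiv:1905.11262 — 2 statements merged into one kernel-verified Lean document; each statement's English description precedes it below -/
import Mathlib

section
/- Let u₁, …, uₘ ∈ ℝ³ be vectors whose third coordinates all equal 1, let w₁, …, wₘ be real numbers, and fix an index i. Then ∑_{j ≠ i} wⱼ · ι(uⱼ) * ι(uᵢ) = 0 in ExteriorAlgebra ℝ (ℝ³) if and only if ∑_{j ≠ i} wⱼ · uⱼ = (∑_{j ≠ i} wⱼ) · uᵢ in ℝ³. -/
/-!
Since `ι(uᵢ) * ι(uᵢ) = 0`, the left-hand side equals `ι(v) * ι(uᵢ)` with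
`v = ∑_{j ≠ i} wⱼ uⱼ - (∑_{j ≠ i} wⱼ) uᵢ`. The third coordinate of `v` vanishes while that of
`uᵢ` is `1`, so `v ≠ 0` would make `v, uᵢ` linearly independent, and the wedge of two
independent vectors is nonzero.
-/

open ExteriorAlgebra

theorem ι_mul_ι_ne_zero_of_linearIndependent {K E : Type*} [Field K] [AddCommGroup E]
    [Module K E] {v x : E} (h : LinearIndependent K ![v, x]) : ι K v * ι K x ≠ 0 := by
  let s := Set.powersetCard.ofFinEmbEquiv (OrderIso.refl (Fin 2)).toOrderEmbedding
  have hs := (exteriorPower.ιMulti_family_linearIndependent_field (n := 2) h).ne_zero s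
  rw [ne_eq, ← Submodule.coe_eq_zero] at hs
  simpa [s, exteriorPower.ιMulti_family, ιMulti_apply, List.ofFn_succ] using hs

theorem linearIndependent_pair_of_mem_ker {K E : Type*} [Field K] [AddCommGroup E]
    [Module K E] {v x : E} (f : E →ₗ[K] K) (hv : f v = 0) (hx : f x ≠ 0) (h0 : v ≠ 0) :
    LinearIndependent K ![v, x] := by
  rw [LinearIndependent.pair_iff]
  intro s t hst
  have ht : t = 0 := by simpa [hv, hx] using congrArg f hst
  subst ht
  simpa [h0] using hst

theorem sum_smul_ι_mul_ι {R M α : Type*} [CommRing R] [AddCommGroup M] [Module R M]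
    (s : Finset α) (w : α → R) (u : α → M) (x : M) :
    ∑ j ∈ s, w j • (ι R (u j) * ι R x) =
      ι R (∑ j ∈ s, w j • u j - (∑ j ∈ s, w j) • x) * ι R x := by
  simp [sub_mul, map_sum, Finset.sum_mul]

/-- Let `u₁, …, uₘ ∈ ℝ³` have third coordinate equal to `1`, let `w₁, …, wₘ ∈ ℝ`, and
fix an index `i`. Then `∑_{j ≠ i} wⱼ · ι(uⱼ) * ι(uᵢ) = 0` in the exterior algebra of `ℝ³`
iff `∑_{j ≠ i} wⱼ · uⱼ = (∑_{j ≠ i} wⱼ) · uᵢ` in `ℝ³`. -/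
theorem stmt4 (m : ℕ) (u : Fin m → ℝ × ℝ × ℝ) (hu : ∀ j, (u j).2.2 = 1)
    (w : Fin m → ℝ) (i : Fin m) :
    (∑ j ∈ Finset.univ.erase i,
        w j • (ExteriorAlgebra.ι ℝ (u j) * ExteriorAlgebra.ι ℝ (u i))) = 0
    ↔ (∑ j ∈ Finset.univ.erase i, w j • u j)
        = (∑ j ∈ Finset.univ.erase i, w j) • u i := by
  let thd : (ℝ × ℝ × ℝ) →ₗ[ℝ] ℝ := LinearMap.snd ℝ ℝ ℝ ∘ₗ LinearMap.snd ℝ ℝ (ℝ × ℝ)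
  have hthd (j : Fin m) : thd (u j) = 1 := hu j
  rw [sum_smul_ι_mul_ι, ← sub_eq_zero (a := ∑ j ∈ _, w j • u j)]
  set v := ∑ j ∈ Finset.univ.erase i, w j • u j - (∑ j ∈ Finset.univ.erase i, w j) • u i
  have hv : thd v = 0 := by simp [v, map_sum, hthd]
  refine ⟨fun h => ?_, fun h => by rw [h, map_zero, zero_mul]⟩
  by_contra h0
  exact ι_mul_ι_ne_zero_of_linearIndependent
    (linearIndependent_pair_of_mem_ker thd hv (by simp [hthd]) h0) h
end

section
/- Let A : ℝ³ ≃ₗ[ℝ] ℝ³ be a linear automorphism of ℝ³ (a projective transformation in homogeneous coordinates), let u₁, …, uₙ ∈ ℝ³, let wᵢⱼ be real numbers, and fix an index i. Then ∑_{j ≠ i} wᵢⱼ · ι(A uⱼ) * ι(A uᵢ) = 0 in ExteriorAlgebra ℝ (ℝ³) if and only if ∑_{j ≠ i} wᵢⱼ · ι(uⱼ) * ι(uᵢ) = 0. In particular, the equilibrium condition defining a tensegrity in the 2-form formulation is projectively invariant. -/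
namespace ExteriorAlgebra

variable {R M N α : Type*} [CommRing R] [AddCommGroup M] [Module R M] [AddCommGroup N]
  [Module R N]

theorem map_sum_smul_ι_mul_ι (f : M →ₗ[R] N) (s : Finset α) (c : α → R) (u : α → M) (v : M) :
    map f (∑ j ∈ s, c j • (ι R (u j) * ι R v)) = ∑ j ∈ s, c j • (ι R (f (u j)) * ι R (f v)) := by
  simp only [map_sum, map_smul, map_mul, map_apply_ι]

theorem map_linearEquiv_eq_zero_iff (e : M ≃ₗ[R] N) {x : ExteriorAlgebra R M} :
    map (e : M →ₗ[R] N) x = 0 ↔ x = 0 :=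
  map_eq_zero_iff _ <| map_injective ⟨e.symm, by ext; simp⟩

end ExteriorAlgebra

/-- Projective invariance of the 2-form equilibrium condition: for a linear automorphism
`A` of `ℝ³` (a projective transformation in homogeneous coordinates), vectors
`u₁, …, uₙ ∈ ℝ³`, stresses `wᵢⱼ` and a fixed index `i`,
`∑_{j ≠ i} wᵢⱼ · ι(A uⱼ) * ι(A uᵢ) = 0` iff `∑_{j ≠ i} wᵢⱼ · ι(uⱼ) * ι(uᵢ) = 0`. -/
theorem stmt5 (n : ℕ) (A : (ℝ × ℝ × ℝ) ≃ₗ[ℝ] (ℝ × ℝ × ℝ))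
    (u : Fin n → ℝ × ℝ × ℝ) (w : Fin n → Fin n → ℝ) (i : Fin n) :
    (∑ j ∈ Finset.univ.erase i,
        w i j • (ExteriorAlgebra.ι ℝ (A (u j)) * ExteriorAlgebra.ι ℝ (A (u i)))) = 0
    ↔ (∑ j ∈ Finset.univ.erase i,
        w i j • (ExteriorAlgebra.ι ℝ (u j) * ExteriorAlgebra.ι ℝ (u i))) = 0 := by
  conv_rhs =>
    rw [← ExteriorAlgebra.map_linearEquiv_eq_zero_iff A, ExteriorAlgebra.map_sum_smul_ι_mul_ι]
  rfl
end
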